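/- Let (Σ_A, T) be a topologically mixing subshift of finite type over the alphabet {1,…,m} and Ψ ∈ C_aa^−(Σ_A,T). Then the limit D(Ψ) := lim_{n→∞} (log #B_n(Ψ))/n exists, and D(Ψ) ≤ (1 + 1/|Ψ_max|)·log m. -/

import Mathlib

open Filter Topology MeasureTheory Set
open scoped ENNReal NNReal

namespace AlmostAdditivePaper

variable {m : ℕ}

/-- The one-sided subshift of finite type determined by a transition matrix `A`
(with entries `0`/`1`). -/
abbrev Subshift (A : Matrix (Fin m) (Fin m) ℕ) : Type :=
  {x : ℕ → Fin m // ∀ n, A (x n) (x (n + 1)) = 1}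

/-- The left shift map `T`. -/
def shiftT (A : Matrix (Fin m) (Fin m) ℕ) : Subshift A → Subshift A :=
  fun x => ⟨fun n => x.1 (n + 1), fun n => x.2 (n + 1)⟩

/-- `A` is a 0-1 matrix with `A ^ p₀ > 0` entrywise for some `p₀ ≥ 1`:
the subshift `Σ_A` is topologically mixing. -/
def Mixing (A : Matrix (Fin m) (Fin m) ℕ) : Prop :=
  (∀ i j, A i j = 0 ∨ A i j = 1) ∧ ∃ p₀ : ℕ, 0 < p₀ ∧ ∀ i j, 0 < (A ^ p₀) i j

/-- Scalar almost additive potential `Φ = (φ_n)_{n ≥ 1}` with constant `C = C(Φ)`;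
we use the convention `φ₀ = 0`. -/
structure AlmostAdditive (A : Matrix (Fin m) (Fin m) ℕ)
    (Φ : ℕ → Subshift A → ℝ) (C : ℝ) : Prop where
  posC : 0 < C
  cont : ∀ n, Continuous (Φ n)
  zero : ∀ x, Φ 0 x = 0
  upper : ∀ n p x, Φ (n + p) x ≤ Φ n x + Φ p ((shiftT A)^[n] x) + C
  lower : ∀ n p x, Φ n x + Φ p ((shiftT A)^[n] x) - C ≤ Φ (n + p) x

/-- Vector-valued almost additive potential: each component is almost additive,
with constant `C j` for the `j`-th component. -/
def AlmostAdditiveVec {d : ℕ} (A : Matrix (Fin m) (Fin m) ℕ)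
    (Φ : ℕ → Subshift A → EuclideanSpace ℝ (Fin d)) (C : Fin d → ℝ) : Prop :=
  ∀ j : Fin d, AlmostAdditive A (fun n x => Φ n x j) (C j)

/-- The cylinder `[w]` of a word `w`. -/
def cyl (A : Matrix (Fin m) (Fin m) ℕ) (w : List (Fin m)) : Set (Subshift A) :=
  {x | ∀ i : Fin w.length, x.1 i.1 = w.get i}

/-- The word `w` is admissible. -/
def AdmWord (A : Matrix (Fin m) (Fin m) ℕ) (w : List (Fin m)) : Prop :=
  ∀ i : ℕ, (h : i + 1 < w.length) → A (w.get ⟨i, by omega⟩) (w.get ⟨i + 1, h⟩) = 1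

/-- `x|_n`, the prefix of length `n` of `x ∈ Σ_A`. -/
def wordPrefix {A : Matrix (Fin m) (Fin m) ℕ} (x : Subshift A) (n : ℕ) : List (Fin m) :=
  List.ofFn fun i : Fin n => x.1 i

/-- `Φ[w] := sup {exp (φ_{|w|}(x)) : x ∈ [w]}`. -/
noncomputable def wordSup (A : Matrix (Fin m) (Fin m) ℕ) (Φ : ℕ → Subshift A → ℝ)
    (w : List (Fin m)) : ℝ :=
  sSup ((fun x => Real.exp (Φ w.length x)) '' cyl A w)

/-- The distance `d_Ψ(x,y) = Ψ[x ∧ y]` associated with a potential `Ψ`. -/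
noncomputable def dPsi (A : Matrix (Fin m) (Fin m) ℕ) (Ψ : ℕ → Subshift A → ℝ)
    (x y : Subshift A) : ℝ :=
  letI := Classical.dec (x = y)
  if h : x = y then 0
  else wordSup A Ψ (wordPrefix x (Nat.find (show ∃ n, x.1 n ≠ y.1 n by
    by_contra hc
    push_neg at hc
    exact h (Subtype.ext (funext hc)))))

/-- The closed ball of center `x` and radius `r` for `d_Ψ`. -/
def ballD (A : Matrix (Fin m) (Fin m) ℕ) (Ψ : ℕ → Subshift A → ℝ)
    (x : Subshift A) (r : ℝ) : Set (Subshift A) :=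
  {y | dPsi A Ψ x y ≤ r}

/-- `B_t(Ψ)`: words whose cylinder is a closed ball of radius `e^{-t}` in `(Σ_A, d_Ψ)`. -/
def Bn (A : Matrix (Fin m) (Fin m) ℕ) (Ψ : ℕ → Subshift A → ℝ) (t : ℝ) :
    Set (List (Fin m)) :=
  {w | ∃ x, cyl A w = ballD A Ψ x (Real.exp (-t))}

variable {E : Type*} [NormedAddCommGroup E] [NormedSpace ℝ E]

/-- `‖φ‖_n := sup {|φ(x) − φ(y)| : x|_n = y|_n}`. -/
noncomputable def varN (A : Matrix (Fin m) (Fin m) ℕ) (φ : Subshift A → E) (n : ℕ) : ℝ :=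
  sSup {r | ∃ x y : Subshift A, wordPrefix x n = wordPrefix y n ∧ r = ‖φ x - φ y‖}

/-- The sup norm `‖φ‖_∞`. -/
noncomputable def supNorm (A : Matrix (Fin m) (Fin m) ℕ) (φ : Subshift A → E) : ℝ :=
  sSup (Set.range fun x => ‖φ x‖)

/-- `‖Φ − Θ‖_lim := limsup_n ‖φ_n − θ_n‖_∞ / n`. -/
noncomputable def limNorm (A : Matrix (Fin m) (Fin m) ℕ) (Φ Θ : ℕ → Subshift A → E) : ℝ :=
  Filter.limsup (fun n : ℕ => supNorm A (fun x => Φ n x - Θ n x) / n) atTop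

/-- `Φ_max := max φ₁ + C(Φ)`. -/
noncomputable def PhiMax (A : Matrix (Fin m) (Fin m) ℕ) (Φ : ℕ → Subshift A → ℝ)
    (C : ℝ) : ℝ :=
  sSup (Set.range (Φ 1)) + C

/-- `Φ_min := min φ₁ − C(Φ)`. -/
noncomputable def PhiMin (A : Matrix (Fin m) (Fin m) ℕ) (Φ : ℕ → Subshift A → ℝ)
    (C : ℝ) : ℝ :=
  sInf (Set.range (Φ 1)) - C

/-- `‖Φ‖ := |Φ_max| ∨ |Φ_min|`. -/
noncomputable def PhiNorm (A : Matrix (Fin m) (Fin m) ℕ) (Φ : ℕ → Subshift A → ℝ)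
    (C : ℝ) : ℝ :=
  max |PhiMax A Φ C| |PhiMin A Φ C|

/-- `μ` is a `T`-invariant Borel probability measure. -/
def InvMeasure (A : Matrix (Fin m) (Fin m) ℕ) (μ : Measure (Subshift A)) : Prop :=
  IsProbabilityMeasure μ ∧ μ.map (shiftT A) = μ

/-- `L_Φ = {Φ_*(μ) : μ ∈ M(Σ_A,T)}`, where `Φ_*(μ) = lim_n (1/n) ∫ φ_n dμ`. -/
def LPhi (A : Matrix (Fin m) (Fin m) ℕ) (Φ : ℕ → Subshift A → E) : Set E :=
  {α | ∃ μ : Measure (Subshift A), InvMeasure A μ ∧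
      Tendsto (fun n : ℕ => (n : ℝ)⁻¹ • ∫ x, Φ n x ∂μ) atTop (𝓝 α)}

/-- `Φ_*(μ) = lim_n (1/n) ∫ φ_n dμ`. -/
noncomputable def potStar (A : Matrix (Fin m) (Fin m) ℕ) (Φ : ℕ → Subshift A → E)
    (μ : Measure (Subshift A)) : E :=
  limUnder atTop fun n : ℕ => (n : ℝ)⁻¹ • ∫ x, Φ n x ∂μ

/-- Entropy of the partition of `Σ_A` into cylinders of length `n`. -/
noncomputable def cylEnt (A : Matrix (Fin m) (Fin m) ℕ) (μ : Measure (Subshift A))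
    (n : ℕ) : ℝ :=
  ∑ w : Fin n → Fin m, Real.negMulLog ((μ (cyl A (List.ofFn w))).toReal)

/-- The measure-theoretic (Kolmogorov–Sinai) entropy `h_μ(T)`, computed through the
natural generating partition into cylinders. -/
noncomputable def entKS (A : Matrix (Fin m) (Fin m) ℕ) (μ : Measure (Subshift A)) : ℝ :=
  limUnder atTop fun n : ℕ => cylEnt A μ n / n

/-- The level set `E_Φ(α) = {x : lim_n φ_n(x)/n = α}`. -/
def EPhi (A : Matrix (Fin m) (Fin m) ℕ) (Φ : ℕ → Subshift A → E) (α : E) :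
    Set (Subshift A) :=
  {x | Tendsto (fun n : ℕ => (n : ℝ)⁻¹ • Φ n x) atTop (𝓝 α)}

/-- The localized level set `E_Φ(ξ) = {x : lim_n φ_n(x)/n = ξ(x)}`. -/
def EPhiXi (A : Matrix (Fin m) (Fin m) ℕ) (Φ : ℕ → Subshift A → E)
    (ξ : Subshift A → E) : Set (Subshift A) :=
  {x | Tendsto (fun n : ℕ => (n : ℝ)⁻¹ • Φ n x) atTop (𝓝 (ξ x))}

/-- `F(α,t,ε,Φ,Ψ)`. -/
def Fset (A : Matrix (Fin m) (Fin m) ℕ) (Φ : ℕ → Subshift A → E)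
    (Ψ : ℕ → Subshift A → ℝ) (α : E) (t ε : ℝ) : Set (List (Fin m)) :=
  {u | u ∈ Bn A Ψ t ∧ ∃ x ∈ cyl A u, ‖(u.length : ℝ)⁻¹ • Φ u.length x - α‖ < ε}

/-- `f(α,t,ε,Φ,Ψ) = # F(α,t,ε,Φ,Ψ)`. -/
noncomputable def fcard (A : Matrix (Fin m) (Fin m) ℕ) (Φ : ℕ → Subshift A → E)
    (Ψ : ℕ → Subshift A → ℝ) (α : E) (t ε : ℝ) : ℕ :=
  Nat.card (Fset A Φ Ψ α t ε)

/-- The large deviation spectrum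
`Λ(α) = lim_{ε → 0⁺} limsup_n log f(α,n,ε) / n`. -/
noncomputable def LambdaD (A : Matrix (Fin m) (Fin m) ℕ) (Φ : ℕ → Subshift A → E)
    (Ψ : ℕ → Subshift A → ℝ) (α : E) : ℝ :=
  limUnder (𝓝[>] (0 : ℝ)) fun ε : ℝ =>
    Filter.limsup (fun n : ℕ => Real.log (fcard A Φ Ψ α n ε) / n) atTop

/-- `D(Ψ) = lim_n log (# B_n(Ψ)) / n`. -/
noncomputable def DPsi (A : Matrix (Fin m) (Fin m) ℕ) (Ψ : ℕ → Subshift A → ℝ) : ℝ :=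
  limUnder atTop fun n : ℕ => Real.log (Nat.card (Bn A Ψ (n : ℝ))) / n

/-- The conditional variational principle quantity
`E(α) = sup {h_μ(T)/(-Ψ_*(μ)) : μ invariant, Φ_*(μ) = α}`. -/
noncomputable def EEsup (A : Matrix (Fin m) (Fin m) ℕ) (Φ : ℕ → Subshift A → E)
    (Ψ : ℕ → Subshift A → ℝ) (α : E) : ℝ :=
  sSup {r | ∃ μ : Measure (Subshift A), InvMeasure A μ ∧ potStar A Φ μ = α ∧
    r = entKS A μ / (-(potStar A Ψ μ))}

/-! ### Dimensions relative to a distance function `ρ` -/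

/-- Diameter of a set, relative to a distance function `ρ`. -/
noncomputable def setDiam {X : Type*} (ρ : X → X → ℝ) (U : Set X) : ℝ≥0∞ :=
  ⨆ x ∈ U, ⨆ y ∈ U, ENNReal.ofReal (ρ x y)

/-- `s`-dimensional Hausdorff measure relative to `ρ`. -/
noncomputable def hMeasD {X : Type*} (ρ : X → X → ℝ) (s : ℝ) (e : Set X) : ℝ≥0∞ :=
  ⨆ (δ : ℝ) (_ : 0 < δ),
    ⨅ (U : ℕ → Set X) (_ : e ⊆ ⋃ n, U n) (_ : ∀ n, setDiam ρ (U n) ≤ ENNReal.ofReal δ),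
      ∑' n, setDiam ρ (U n) ^ s

/-- Hausdorff dimension relative to `ρ`. -/
noncomputable def hdimD {X : Type*} (ρ : X → X → ℝ) (e : Set X) : ℝ≥0∞ :=
  ⨆ (s : ℝ≥0) (_ : hMeasD ρ (s : ℝ) e = ⊤), (s : ℝ≥0∞)

/-- Minimal number of sets of diameter `≤ δ` needed to cover `e` (relative to `ρ`). -/
noncomputable def coverNum {X : Type*} (ρ : X → X → ℝ) (e : Set X) (δ : ℝ) : ℕ :=
  sInf {k : ℕ | ∃ U : Fin k → Set X, e ⊆ ⋃ i, U i ∧ ∀ i, setDiam ρ (U i) ≤ ENNReal.ofReal δ}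

/-- Upper box-counting dimension relative to `ρ`. -/
noncomputable def uboxD {X : Type*} (ρ : X → X → ℝ) (e : Set X) : ℝ≥0∞ :=
  Filter.limsup (fun n : ℕ =>
    ENNReal.ofReal (Real.log (coverNum ρ e (Real.exp (-(n : ℝ)))) / n)) atTop

/-- Lower box-counting dimension relative to `ρ`. -/
noncomputable def lboxD {X : Type*} (ρ : X → X → ℝ) (e : Set X) : ℝ≥0∞ :=
  Filter.liminf (fun n : ℕ =>
    ENNReal.ofReal (Real.log (coverNum ρ e (Real.exp (-(n : ℝ)))) / n)) atTop

/-- Packing dimension relative to `ρ` (via the modified upper box dimension). -/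
noncomputable def pdimD {X : Type*} (ρ : X → X → ℝ) (e : Set X) : ℝ≥0∞ :=
  ⨅ (F : ℕ → Set X) (_ : e ⊆ ⋃ n, F n), ⨆ n, uboxD ρ (F n)

/-! ### Weak concavity and cone points -/

/-- `h` is weakly concave on the convex set `s`. -/
def WeaklyConcaveOn {V : Type*} [AddCommGroup V] [Module ℝ V] (s : Set V) (h : V → ℝ) :
    Prop :=
  ∃ c : ℝ, 1 ≤ c ∧ ∀ α ∈ s, ∀ β ∈ s, ∃ γ₁ ∈ Set.Icc c⁻¹ c, ∃ γ₂ ∈ Set.Icc c⁻¹ c,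
    ∀ l ∈ Set.Icc (0 : ℝ) 1,
      l * h α + (1 - l) * h β ≤
        h ((l * γ₁ + (1 - l) * γ₂)⁻¹ • ((l * γ₁) • α + ((1 - l) * γ₂) • β))

/-- `x` is an `ε`-cone point of `s`. -/
def IsConePoint {V : Type*} [NormedAddCommGroup V] [NormedSpace ℝ V] (s : Set V)
    (x : V) (ε : ℝ) : Prop :=
  ∀ y ∈ s ∩ Metric.ball x ε, y ≠ x → segment ℝ x (x + (ε / ‖y - x‖) • (y - x)) ⊆ s

/-- `x` is a local cone point of `s`. -/
def IsLocalConePoint {V : Type*} [NormedAddCommGroup V] [NormedSpace ℝ V] (s : Set V)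
    (x : V) : Prop :=
  ∃ ε > 0, IsConePoint s x ε

/-! Write `M(t)` for the set of heavy words `w`, those with `Ψ[w] > e^{-t}`. Almost additivity
gives `Ψ[u z] ≤ e^C Ψ[u] Ψ[z]` and `Ψ[w c] ≤ e^{Ψ_max} Ψ[w] ≤ Ψ[w]`. Cutting a word of
`M(t + s) \ M(t)` after its shortest non-heavy prefix `p c` leaves `p ∈ M(t)` and a tail in
`M(s + C)`, so `#M(t + s) ≤ (m + 1) #M(t) #M(s + C)` and Fekete's lemma gives the limit `L` of
`log #M(n) / n`. The closed ball of radius `e^{-t}` around `x` is the cylinder of the shortest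
non-heavy prefix `x|_k`, and a word `w` with `[w] = [x|_k]` has length at most `k + m`: the
letters beyond `k` are forced, and more than `m` forced letters would close a forced cycle,
which mixing forbids. Hence `#B_n(Ψ)` and `#M(n)` differ by a factor `O(n)`, and `L` is also
the growth rate of `#B_n(Ψ)`. Finally heavy words at level `n` have length `< n / |Ψ_max|`,
so `L ≤ log m / |Ψ_max|`. -/

lemma card_le_card_of_subset_range {α β : Type*} [Finite α] {s : Set β} (f : α → β)
    (h : s ⊆ range f) : Nat.card s ≤ Nat.card α :=
  (Nat.card_mono (finite_range f) h).trans (Finite.card_range_le f)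

lemma log_le_log_add_log_of_le_mul {x y z : ℕ} (hx : 0 < x) (h : x ≤ y * z) :
    Real.log x ≤ Real.log y + Real.log z := by
  have hyz : 0 < y * z := hx.trans_le h
  rw [← Real.log_mul (by exact_mod_cast left_ne_zero_of_mul hyz.ne')
    (by exact_mod_cast right_ne_zero_of_mul hyz.ne')]
  exact Real.log_le_log (by exact_mod_cast hx) (by exact_mod_cast h)

lemma abs_log_sub_log_le {x y k : ℕ} (hx : 0 < x) (hy : 0 < y) (hxy : x ≤ y * k)
    (hyx : y ≤ x * k) : |Real.log x - Real.log y| ≤ Real.log k := by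
  have := log_le_log_add_log_of_le_mul hx hxy
  have := log_le_log_add_log_of_le_mul hy hyx
  exact abs_sub_le_iff.2 ⟨by linarith, by linarith⟩

lemma tendsto_div_of_abs_sub_le {f g : ℕ → ℝ} {L c : ℝ}
    (hf : Tendsto (fun n => f n / n) atTop (𝓝 L))
    (hfg : ∀ᶠ n in atTop, |g n - f n| ≤ c + Real.log n) :
    Tendsto (fun n => g n / n) atTop (𝓝 L) := by
  have hlog : Tendsto (fun n : ℕ => Real.log n / n) atTop (𝓝 0) :=
    Real.isLittleO_log_id_atTop.tendsto_div_nhds_zero.comp tendsto_natCast_atTop_atTop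
  have herr : Tendsto (fun n : ℕ => (c + Real.log n) / n) atTop (𝓝 0) := by
    simpa [add_div] using (tendsto_const_div_atTop_nhds_zero_nat c).add hlog
  have hdiff : Tendsto (fun n => (g n - f n) / n) atTop (𝓝 0) :=
    squeeze_zero_norm' (hfg.mono fun n hn => by
      rw [norm_div, Real.norm_eq_abs, Real.norm_natCast]
      exact div_le_div_of_nonneg_right hn n.cast_nonneg) herr
  simpa [← add_div] using hf.add hdiff

lemma card_length_lt_le (hm : 2 ≤ m) (N : ℕ) :
    Nat.card {w : List (Fin m) | w.length < N} ≤ m ^ N := by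
  induction N with
  | zero => simp
  | succ N ih =>
    have hsplit : {w : List (Fin m) | w.length < N + 1} =
        {w | w.length < N} ∪ {w | w.length = N} := by
      ext w; simp; omega
    have hN : Nat.card {w : List (Fin m) | w.length = N} = m ^ N := by
      show Nat.card (List.Vector (Fin m) N) = m ^ N
      rw [Nat.card_eq_fintype_card, card_vector, Fintype.card_fin]
    rw [hsplit, pow_succ]
    calc _ ≤ _ := Set.card_union_le _ _
      _ ≤ m ^ N * 2 := by omega
      _ ≤ m ^ N * m := Nat.mul_le_mul_left _ hm

variable {A : Matrix (Fin m) (Fin m) ℕ} {Ψ : ℕ → Subshift A → ℝ} {CΨ : ℝ}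

lemma length_wordPrefix (x : Subshift A) (n : ℕ) : (wordPrefix x n).length = n :=
  List.length_ofFn

lemma mem_cyl_iff {x : Subshift A} {w : List (Fin m)} :
    x ∈ cyl A w ↔ ∀ i (h : i < w.length), x.1 i = w[i] :=
  ⟨fun hx i h => hx ⟨i, h⟩, fun hx i => hx i.1 i.2⟩

lemma mem_cyl_wordPrefix_iff {x y : Subshift A} {k : ℕ} :
    y ∈ cyl A (wordPrefix x k) ↔ ∀ i < k, y.1 i = x.1 i := by
  simp [mem_cyl_iff, wordPrefix]

lemma mem_cyl_wordPrefix (x : Subshift A) (k : ℕ) : x ∈ cyl A (wordPrefix x k) :=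
  mem_cyl_wordPrefix_iff.2 fun _ _ => rfl

lemma cyl_wordPrefix_anti (x : Subshift A) {k l : ℕ} (h : k ≤ l) :
    cyl A (wordPrefix x l) ⊆ cyl A (wordPrefix x k) := fun _ hy =>
  mem_cyl_wordPrefix_iff.2 fun i hi => mem_cyl_wordPrefix_iff.1 hy i (hi.trans_le h)

lemma eq_wordPrefix_of_mem_cyl {x : Subshift A} {w : List (Fin m)} (hx : x ∈ cyl A w) :
    w = wordPrefix x w.length :=
  List.ext_getElem (length_wordPrefix x _).symm fun i h _ => by
    simp [wordPrefix, mem_cyl_iff.1 hx i h]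

lemma eq_of_mem_cyl_of_length_eq {x : Subshift A} {w w' : List (Fin m)} (hw : x ∈ cyl A w)
    (hw' : x ∈ cyl A w') (hlen : w.length = w'.length) : w = w' := by
  rw [eq_wordPrefix_of_mem_cyl hw, eq_wordPrefix_of_mem_cyl hw', hlen]

lemma wordPrefix_succ (x : Subshift A) (j : ℕ) :
    wordPrefix x (j + 1) = wordPrefix x j ++ [x.1 j] := by
  rw [wordPrefix, List.ofFn_succ', List.concat_eq_append]
  rfl

lemma take_wordPrefix (x : Subshift A) {k l : ℕ} (h : k ≤ l) :
    (wordPrefix x l).take k = wordPrefix x k :=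
  List.ext_getElem (by simp [length_wordPrefix, h]) fun i _ _ => by simp [wordPrefix]

lemma shiftT_iterate_apply (x : Subshift A) (k i : ℕ) :
    ((shiftT A)^[k] x).1 i = x.1 (i + k) := by
  induction k generalizing x with
  | zero => rfl
  | succ k ih => rw [Function.iterate_succ_apply, ih]; rfl

lemma mem_cyl_append {x : Subshift A} {u z : List (Fin m)} (hx : x ∈ cyl A (u ++ z)) :
    x ∈ cyl A u ∧ (shiftT A)^[u.length] x ∈ cyl A z := by
  rw [mem_cyl_iff] at hx
  refine ⟨mem_cyl_iff.2 fun i h => ?_, mem_cyl_iff.2 fun i h => ?_⟩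
  · rw [hx i (by simp; omega), List.getElem_append_left h]
  · rw [shiftT_iterate_apply, Nat.add_comm, hx _ (by simp; omega),
      List.getElem_append_right (by omega)]
    simp

namespace Mixing

lemma exists_adj (hA : Mixing A) (c : Fin m) : ∃ d, A c d = 1 := by
  obtain ⟨h01, p₀, hp₀, hpos⟩ := hA
  have hrow : 0 < (A * A ^ (p₀ - 1)) c c := by
    rw [← pow_succ', Nat.sub_add_cancel hp₀]; exact hpos c c
  rw [Matrix.mul_apply] at hrow
  obtain ⟨d, -, hd⟩ := Finset.exists_ne_zero_of_sum_ne_zero hrow.ne'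
  exact ⟨d, (h01 c d).resolve_left (left_ne_zero_of_mul hd)⟩

lemma exists_start (hA : Mixing A) (c : Fin m) : ∃ z : Subshift A, z.1 0 = c := by
  choose next hnext using hA.exists_adj
  exact ⟨⟨fun n => next^[n] c, fun n => by
    simp only [Function.iterate_succ_apply']; exact hnext _⟩, rfl⟩

lemma nonempty (hA : Mixing A) (hm : 0 < m) : Nonempty (Subshift A) :=
  ⟨(hA.exists_start ⟨0, hm⟩).choose⟩

lemma exists_mem_cyl_wordPrefix_apply_eq (hA : Mixing A) (x : Subshift A) {j : ℕ} {e : Fin m}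
    (he : A (x.1 j) e = 1) : ∃ y ∈ cyl A (wordPrefix x (j + 1)), y.1 (j + 1) = e := by
  obtain ⟨z, hz⟩ := hA.exists_start e
  let y : ℕ → Fin m := fun i => if i ≤ j then x.1 i else z.1 (i - (j + 1))
  have hy : ∀ i, A (y i) (y (i + 1)) = 1 := by
    intro i
    rcases lt_trichotomy i j with h | rfl | h
    · simp only [y, if_pos h.le, if_pos (Nat.succ_le_of_lt h)]; exact x.2 i
    · simp only [y, le_refl, if_true, Nat.not_succ_le_self, if_false, Nat.sub_self, hz]
      exact he
    · simp only [y, if_neg (by omega : ¬ i ≤ j), if_neg (by omega : ¬ i + 1 ≤ j)]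
      rw [show i + 1 - (j + 1) = i - (j + 1) + 1 by omega]
      exact z.2 _
  refine ⟨⟨y, hy⟩, mem_cyl_wordPrefix_iff.2 fun i hi => if_pos (by omega), ?_⟩
  simp [y, hz]

/-- Otherwise the row of `A ^ r` indexed by `y 0` would have the single nonzero entry `y r`,
whereas `A ^ p₀` is positive and `m ≥ 2`. -/
lemma not_forall_forced (hA : Mixing A) (hm : 2 ≤ m) (y : ℕ → Fin m) :
    ¬ ∀ i e, A (y i) e = 1 → e = y (i + 1) := by
  intro hforced
  have hpow : ∀ r e, (A ^ r) (y 0) e ≠ 0 → e = y r := by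
    intro r
    induction r with
    | zero =>
      intro e he
      by_contra hne
      exact he (Matrix.one_apply_ne' hne)
    | succ r ih =>
      intro e he
      rw [pow_succ, Matrix.mul_apply] at he
      obtain ⟨c, -, hc⟩ := Finset.exists_ne_zero_of_sum_ne_zero he
      have hAc : A c e = 1 := (hA.1 c e).resolve_left (right_ne_zero_of_mul hc)
      exact hforced r e (ih c (left_ne_zero_of_mul hc) ▸ hAc)
  obtain ⟨-, p₀, -, hpos⟩ := hA
  have h0 := hpow p₀ ⟨0, by omega⟩ (hpos _ _).ne'
  have h1 := hpow p₀ ⟨1, by omega⟩ (hpos _ _).ne'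
  exact absurd (congrArg Fin.val (h0.trans h1.symm)) (by simp)

end Mixing

lemma eq_of_cyl_wordPrefix_subset_succ (hA : Mixing A) (x : Subshift A) {j : ℕ}
    (hsub : cyl A (wordPrefix x (j + 1)) ⊆ cyl A (wordPrefix x (j + 2))) {e : Fin m}
    (he : A (x.1 j) e = 1) : e = x.1 (j + 1) := by
  obtain ⟨y, hy, rfl⟩ := hA.exists_mem_cyl_wordPrefix_apply_eq x he
  exact mem_cyl_wordPrefix_iff.1 (hsub hy) (j + 1) (by omega)

/-- If `[x|_k] = [x|_l]`, each of the letters `x_k, …, x_{l-1}` is the only admissible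
successor of the previous one. Among `x_{k-1}, …, x_{k-1+m}` two letters coincide, which
closes these forced steps into a cycle and contradicts `Mixing.not_forall_forced`. -/
lemma cyl_wordPrefix_ne (hA : Mixing A) (hm : 2 ≤ m) (x : Subshift A) {k l : ℕ}
    (hk : 0 < k) (hkl : k + m < l) : cyl A (wordPrefix x k) ≠ cyl A (wordPrefix x l) := by
  intro heq
  have hforced :
      ∀ j, k ≤ j + 1 → j + 2 ≤ l → ∀ e, A (x.1 j) e = 1 → e = x.1 (j + 1) :=
    fun j hj hj' _ => eq_of_cyl_wordPrefix_subset_succ hA x <|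
      (cyl_wordPrefix_anti x hj).trans (heq ▸ cyl_wordPrefix_anti x hj')
  obtain ⟨p, q, hpq, hval⟩ := Fintype.exists_ne_map_eq_of_card_lt
    (fun i : Fin (m + 1) => x.1 (k - 1 + i)) (by simp)
  wlog hlt : p < q generalizing p q
  · exact this q p hpq.symm hval.symm (lt_of_le_of_ne (not_lt.1 hlt) hpq.symm)
  have hq := q.2
  set P := k - 1 + (p : ℕ)
  set d := (q : ℕ) - p
  have hd : 0 < d := by simp only [d]; omega
  have hper : x.1 (P + d) = x.1 P := by
    rw [show P + d = k - 1 + q by simp only [P, d]; omega]; exact hval.symm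
  refine hA.not_forall_forced hm (fun i => x.1 (P + i % d)) fun i e he => ?_
  have hr := Nat.mod_lt i hd
  rw [hforced _ (by omega) (by omega) e he, ← Nat.mod_add_mod, add_assoc]
  rcases Nat.lt_or_ge (i % d + 1) d with h | h
  · rw [Nat.mod_eq_of_lt h]
  · rw [show i % d + 1 = d by omega, Nat.mod_self, hper, add_zero]

lemma apply_one_le_phiMax_sub (hΨ : AlmostAdditive A Ψ CΨ) (hneg : PhiMax A Ψ CΨ < 0)
    (x : Subshift A) : Ψ 1 x ≤ PhiMax A Ψ CΨ - CΨ := by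
  have hbdd : BddAbove (range (Ψ 1)) := by
    by_contra h
    rw [PhiMax, Real.sSup_of_not_bddAbove h] at hneg
    linarith [hΨ.posC]
  rw [PhiMax, add_sub_cancel_right]
  exact le_csSup hbdd (mem_range_self x)

lemma apply_le_mul_phiMax (hΨ : AlmostAdditive A Ψ CΨ) (hneg : PhiMax A Ψ CΨ < 0) (n : ℕ)
    (x : Subshift A) : Ψ n x ≤ n * PhiMax A Ψ CΨ := by
  induction n generalizing x with
  | zero => simp [hΨ.zero x]
  | succ n ih =>
    have := hΨ.upper n 1 x
    have := apply_one_le_phiMax_sub hΨ hneg ((shiftT A)^[n] x)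
    push_cast
    linarith [ih x]

lemma wordSup_nonneg (w : List (Fin m)) : 0 ≤ wordSup A Ψ w :=
  Real.sSup_nonneg (by rintro _ ⟨_, -, rfl⟩; positivity)

lemma le_wordSup (hΨ : AlmostAdditive A Ψ CΨ) (hneg : PhiMax A Ψ CΨ < 0) {w : List (Fin m)}
    {x : Subshift A} (hx : x ∈ cyl A w) : Real.exp (Ψ w.length x) ≤ wordSup A Ψ w := by
  refine le_csSup ⟨1, ?_⟩ ⟨x, hx, rfl⟩
  rintro _ ⟨y, -, rfl⟩
  refine Real.exp_le_one_iff.2 ((apply_le_mul_phiMax hΨ hneg _ y).trans ?_)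
  exact mul_nonpos_of_nonneg_of_nonpos (Nat.cast_nonneg _) hneg.le

lemma wordSup_le_of_forall_le {w : List (Fin m)} {r : ℝ} (hr : 0 ≤ r)
    (h : ∀ x ∈ cyl A w, Real.exp (Ψ w.length x) ≤ r) : wordSup A Ψ w ≤ r := by
  rcases (cyl A w).eq_empty_or_nonempty with hw | ⟨x, hx⟩
  · rwa [wordSup, hw, image_empty, Real.sSup_empty]
  · exact csSup_le ⟨_, x, hx, rfl⟩ (by rintro _ ⟨y, hy, rfl⟩; exact h y hy)

lemma wordSup_le_exp (hΨ : AlmostAdditive A Ψ CΨ) (hneg : PhiMax A Ψ CΨ < 0)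
    (w : List (Fin m)) : wordSup A Ψ w ≤ Real.exp (w.length * PhiMax A Ψ CΨ) :=
  wordSup_le_of_forall_le (Real.exp_pos _).le fun x _ =>
    Real.exp_le_exp.2 (apply_le_mul_phiMax hΨ hneg _ x)

lemma nonempty_cyl_of_wordSup_pos {w : List (Fin m)} (h : 0 < wordSup A Ψ w) :
    (cyl A w).Nonempty := by
  by_contra hw
  rw [wordSup, not_nonempty_iff_eq_empty.1 hw, image_empty, Real.sSup_empty] at h
  exact h.false

lemma wordSup_nil (hA : Mixing A) (hm : 0 < m) (hΨ : AlmostAdditive A Ψ CΨ) :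
    wordSup A Ψ [] = 1 := by
  have hcyl : cyl A ([] : List (Fin m)) = univ := eq_univ_of_forall fun _ i => i.elim0
  have := hA.nonempty hm
  simp [wordSup, hcyl, hΨ.zero]

lemma wordSup_append_le (hΨ : AlmostAdditive A Ψ CΨ) (hneg : PhiMax A Ψ CΨ < 0)
    (u z : List (Fin m)) :
    wordSup A Ψ (u ++ z) ≤ Real.exp CΨ * wordSup A Ψ u * wordSup A Ψ z := by
  have := wordSup_nonneg (Ψ := Ψ) u
  refine wordSup_le_of_forall_le (by have := wordSup_nonneg (Ψ := Ψ) z; positivity)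
    fun y hy => ?_
  obtain ⟨hyu, hyz⟩ := mem_cyl_append hy
  calc Real.exp (Ψ (u ++ z).length y)
      ≤ Real.exp CΨ * Real.exp (Ψ u.length y) *
          Real.exp (Ψ z.length ((shiftT A)^[u.length] y)) := by
        rw [← Real.exp_add, ← Real.exp_add, List.length_append]
        exact Real.exp_le_exp.2 (by linarith [hΨ.upper u.length z.length y])
    _ ≤ Real.exp CΨ * wordSup A Ψ u * wordSup A Ψ z := by
        gcongr
        exacts [le_wordSup hΨ hneg hyu, le_wordSup hΨ hneg hyz]

lemma wordSup_append_singleton_le (hΨ : AlmostAdditive A Ψ CΨ) (hneg : PhiMax A Ψ CΨ < 0)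
    (w : List (Fin m)) (c : Fin m) : wordSup A Ψ (w ++ [c]) ≤ wordSup A Ψ w := by
  have hc : wordSup A Ψ [c] ≤ Real.exp (PhiMax A Ψ CΨ - CΨ) :=
    wordSup_le_of_forall_le (Real.exp_pos _).le fun x _ =>
      Real.exp_le_exp.2 (apply_one_le_phiMax_sub hΨ hneg x)
  have hmax : Real.exp (PhiMax A Ψ CΨ) ≤ 1 := Real.exp_le_one_iff.2 hneg.le
  have := wordSup_nonneg (Ψ := Ψ) w
  calc wordSup A Ψ (w ++ [c]) ≤ Real.exp CΨ * wordSup A Ψ w * wordSup A Ψ [c] :=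
        wordSup_append_le hΨ hneg w [c]
    _ ≤ Real.exp CΨ * wordSup A Ψ w * Real.exp (PhiMax A Ψ CΨ - CΨ) := by gcongr
    _ = Real.exp (PhiMax A Ψ CΨ) * wordSup A Ψ w := by
        rw [Real.exp_sub]; field_simp
    _ ≤ wordSup A Ψ w := mul_le_of_le_one_left this hmax

lemma antitone_wordSup_wordPrefix (hΨ : AlmostAdditive A Ψ CΨ) (hneg : PhiMax A Ψ CΨ < 0)
    (x : Subshift A) : Antitone fun j => wordSup A Ψ (wordPrefix x j) :=
  antitone_nat_of_succ_le fun j => by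
    simpa only [wordPrefix_succ] using wordSup_append_singleton_le hΨ hneg _ _

/-- A word with empty cylinder has `Ψ[w] = sSup ∅ = 0`, so it is never heavy. -/
def heavyWords (A : Matrix (Fin m) (Fin m) ℕ) (Ψ : ℕ → Subshift A → ℝ) (t : ℝ) :
    Set (List (Fin m)) :=
  {w | Real.exp (-t) < wordSup A Ψ w}

lemma heavyWords_mono {t t' : ℝ} (h : t ≤ t') : heavyWords A Ψ t ⊆ heavyWords A Ψ t' :=
  fun _ hw => (Real.exp_le_exp.2 (neg_le_neg h)).trans_lt hw

lemma length_lt_of_mem_heavyWords (hΨ : AlmostAdditive A Ψ CΨ) (hneg : PhiMax A Ψ CΨ < 0)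
    {t : ℝ} {w : List (Fin m)} (hw : w ∈ heavyWords A Ψ t) :
    w.length < ⌈t / -PhiMax A Ψ CΨ⌉₊ := by
  have := Real.exp_lt_exp.1 (hw.trans_le (wordSup_le_exp hΨ hneg w))
  rw [Nat.lt_ceil, lt_div_iff₀ (neg_pos.2 hneg)]
  linarith

lemma finite_heavyWords (hΨ : AlmostAdditive A Ψ CΨ) (hneg : PhiMax A Ψ CΨ < 0) (t : ℝ) :
    (heavyWords A Ψ t).Finite :=
  (List.finite_length_lt _ _).subset fun _ => length_lt_of_mem_heavyWords hΨ hneg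

lemma nil_mem_heavyWords (hA : Mixing A) (hm : 0 < m) (hΨ : AlmostAdditive A Ψ CΨ)
    {t : ℝ} (ht : 0 < t) : [] ∈ heavyWords A Ψ t := by
  show Real.exp (-t) < wordSup A Ψ []
  rw [wordSup_nil hA hm hΨ]
  exact Real.exp_lt_one_iff.2 (neg_lt_zero.2 ht)

lemma card_heavyWords_pos (hA : Mixing A) (hm : 0 < m) (hΨ : AlmostAdditive A Ψ CΨ)
    (hneg : PhiMax A Ψ CΨ < 0) {t : ℝ} (ht : 0 < t) : 0 < Nat.card (heavyWords A Ψ t) :=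
  have := (finite_heavyWords hΨ hneg t).to_subtype
  Nat.card_pos_iff.2 ⟨⟨⟨[], nil_mem_heavyWords hA hm hΨ ht⟩⟩, this⟩

lemma exists_wordPrefix_mem_heavyWords_iff (hA : Mixing A) (hm : 0 < m)
    (hΨ : AlmostAdditive A Ψ CΨ) (hneg : PhiMax A Ψ CΨ < 0) (x : Subshift A) {t : ℝ}
    (ht : 0 < t) : ∃ k, 0 < k ∧ ∀ j, wordPrefix x j ∈ heavyWords A Ψ t ↔ j < k := by
  classical
  have hex : ∃ j, wordPrefix x j ∉ heavyWords A Ψ t := ⟨_, fun h =>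
    (length_lt_of_mem_heavyWords hΨ hneg h).ne (length_wordPrefix x _)⟩
  refine ⟨Nat.find hex, (Nat.find_pos hex).2 (not_not.2 (nil_mem_heavyWords hA hm hΨ ht)),
    fun j => ⟨fun hj => ?_, fun hj => ?_⟩⟩
  · by_contra hk
    exact Nat.find_spec hex <|
      hj.trans_le (antitone_wordSup_wordPrefix hΨ hneg x (not_lt.1 hk))
  · exact not_not.1 (Nat.find_min hex hj)

/-- Cut `w` after its shortest non-heavy prefix `p c`: then
`e^{-(t+s)} < Ψ[w] ≤ e^C Ψ[p c] Ψ[z] ≤ e^{C-t} Ψ[z]`. -/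
lemma exists_eq_append_of_mem_heavyWords_add (hA : Mixing A) (hm : 0 < m)
    (hΨ : AlmostAdditive A Ψ CΨ) (hneg : PhiMax A Ψ CΨ < 0) {t s : ℝ} (ht : 0 < t)
    {w : List (Fin m)} (hw : w ∈ heavyWords A Ψ (t + s)) (hwt : w ∉ heavyWords A Ψ t) :
    ∃ p ∈ heavyWords A Ψ t, ∃ c, ∃ z ∈ heavyWords A Ψ (s + CΨ), w = p ++ [c] ++ z := by
  obtain ⟨x, hx⟩ := nonempty_cyl_of_wordSup_pos ((Real.exp_pos _).trans hw)
  have hwx := eq_wordPrefix_of_mem_cyl hx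
  obtain ⟨k, hk0, hk⟩ := exists_wordPrefix_mem_heavyWords_iff hA hm hΨ hneg x ht
  have hkw : k ≤ w.length := not_lt.1 fun h => hwt (hwx ▸ (hk _).2 h)
  have hpk : wordPrefix x (k - 1) ++ [x.1 (k - 1)] = wordPrefix x k := by
    rw [← wordPrefix_succ, Nat.sub_add_cancel hk0]
  have hsplit : w = wordPrefix x k ++ w.drop k := by
    rw [← take_wordPrefix x hkw, ← hwx, List.take_append_drop]
  refine ⟨wordPrefix x (k - 1), (hk (k - 1)).2 (by omega), x.1 (k - 1), w.drop k, ?_,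
    by rw [hpk]; exact hsplit⟩
  have hkt : wordSup A Ψ (wordPrefix x k) ≤ Real.exp (-t) :=
    not_lt.1 fun h => ((hk k).1 h).false
  have := wordSup_nonneg (Ψ := Ψ) (w.drop k)
  have key : Real.exp (CΨ - t) * Real.exp (-(s + CΨ)) <
      Real.exp (CΨ - t) * wordSup A Ψ (w.drop k) :=
    calc Real.exp (CΨ - t) * Real.exp (-(s + CΨ)) = Real.exp (-(t + s)) := by
          rw [← Real.exp_add]; ring_nf
      _ < wordSup A Ψ w := hw
      _ ≤ Real.exp CΨ * wordSup A Ψ (wordPrefix x k) * wordSup A Ψ (w.drop k) := by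
          conv_lhs => rw [hsplit]
          exact wordSup_append_le hΨ hneg _ _
      _ ≤ Real.exp CΨ * Real.exp (-t) * wordSup A Ψ (w.drop k) := by gcongr
      _ = Real.exp (CΨ - t) * wordSup A Ψ (w.drop k) := by rw [sub_eq_add_neg, Real.exp_add]
  exact lt_of_mul_lt_mul_left key (Real.exp_pos _).le

lemma card_heavyWords_add_le (hA : Mixing A) (hm : 0 < m) (hΨ : AlmostAdditive A Ψ CΨ)
    (hneg : PhiMax A Ψ CΨ < 0) {t s : ℝ} (ht : 0 < t) (hs : 0 ≤ s) :
    Nat.card (heavyWords A Ψ (t + s)) ≤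
      Nat.card (heavyWords A Ψ t) * ((m + 1) * Nat.card (heavyWords A Ψ (s + CΨ))) := by
  have := (finite_heavyWords hΨ hneg t).to_subtype
  have := (finite_heavyWords hΨ hneg (s + CΨ)).to_subtype
  have hsC : 0 < s + CΨ := by linarith [hΨ.posC]
  let glue : heavyWords A Ψ t × Option (Fin m) × heavyWords A Ψ (s + CΨ) → List (Fin m) :=
    fun ⟨p, c, z⟩ => c.elim p.1 fun c => p.1 ++ [c] ++ z.1
  have hcover : heavyWords A Ψ (t + s) ⊆ range glue := by
    intro w hw
    by_cases hwt : w ∈ heavyWords A Ψ t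
    · exact ⟨(⟨w, hwt⟩, none, ⟨[], nil_mem_heavyWords hA hm hΨ hsC⟩), rfl⟩
    · obtain ⟨p, hp, c, z, hz, rfl⟩ :=
        exists_eq_append_of_mem_heavyWords_add hA hm hΨ hneg ht hw hwt
      exact ⟨(⟨p, hp⟩, some c, ⟨z, hz⟩), rfl⟩
  simpa [Nat.card_prod, Finite.card_option] using card_le_card_of_subset_range glue hcover

lemma dPsi_self (x : Subshift A) : dPsi A Ψ x x = 0 := by
  simp [dPsi]

lemma exists_dPsi_eq_wordSup {x y : Subshift A} (hxy : x ≠ y) :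
    ∃ D, x.1 D ≠ y.1 D ∧ (∀ i < D, x.1 i = y.1 i) ∧
      dPsi A Ψ x y = wordSup A Ψ (wordPrefix x D) := by
  have hex : ∃ n, x.1 n ≠ y.1 n := by
    by_contra! hc
    exact hxy (Subtype.ext (funext hc))
  refine ⟨Nat.find hex, Nat.find_spec hex, fun i hi => not_ne_iff.1 (Nat.find_min hex hi), ?_⟩
  rw [dPsi, dif_neg hxy]

lemma mem_ballD_self (x : Subshift A) (t : ℝ) : x ∈ ballD A Ψ x (Real.exp (-t)) := by
  show dPsi A Ψ x x ≤ _
  rw [dPsi_self]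
  positivity

/-- `y ≠ x` lies in the ball iff the prefix of `x` up to the first disagreement `D` is not
heavy, i.e. iff `k ≤ D`. -/
lemma ballD_eq_cyl {x : Subshift A} {t : ℝ} {k : ℕ}
    (hk : ∀ j, wordPrefix x j ∈ heavyWords A Ψ t ↔ j < k) :
    ballD A Ψ x (Real.exp (-t)) = cyl A (wordPrefix x k) := by
  ext y
  rcases eq_or_ne x y with rfl | hxy
  · exact iff_of_true (mem_ballD_self x t) (mem_cyl_wordPrefix x k)
  obtain ⟨D, hD, hlt, hd⟩ := exists_dPsi_eq_wordSup (Ψ := Ψ) hxy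
  have hball : y ∈ ballD A Ψ x (Real.exp (-t)) ↔ k ≤ D := by
    show dPsi A Ψ x y ≤ Real.exp (-t) ↔ k ≤ D
    rw [hd, ← not_lt (a := D), ← hk D]
    exact not_lt.symm
  rw [hball, mem_cyl_wordPrefix_iff]
  refine ⟨fun hkD i hi => (hlt i (by omega)).symm, fun h => ?_⟩
  by_contra! hDk
  exact hD (h D hDk).symm

lemma nonempty_cyl_of_mem_Bn {t : ℝ} {w : List (Fin m)} (hw : w ∈ Bn A Ψ t) :
    (cyl A w).Nonempty := by
  obtain ⟨x, hx⟩ := hw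
  exact ⟨x, hx ▸ mem_ballD_self x t⟩

lemma exists_cyl_eq_cyl_append_of_mem_Bn (hA : Mixing A) (hm : 2 ≤ m)
    (hΨ : AlmostAdditive A Ψ CΨ) (hneg : PhiMax A Ψ CΨ < 0) {t : ℝ} (ht : 0 < t)
    {w : List (Fin m)} (hw : w ∈ Bn A Ψ t) :
    ∃ p ∈ heavyWords A Ψ t, ∃ c,
      cyl A w = cyl A (p ++ [c]) ∧ w.length ≤ p.length + 1 + m := by
  obtain ⟨x, hball⟩ := hw
  obtain ⟨k, hk0, hk⟩ := exists_wordPrefix_mem_heavyWords_iff hA (by omega) hΨ hneg x ht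
  have hcyl : cyl A w = cyl A (wordPrefix x k) := hball.trans (ballD_eq_cyl hk)
  have hwx := eq_wordPrefix_of_mem_cyl (hcyl ▸ mem_cyl_wordPrefix x k)
  have hlen : w.length ≤ k + m := by
    by_contra! h
    rw [hwx] at hcyl
    exact cyl_wordPrefix_ne hA hm x hk0 h hcyl.symm
  refine ⟨wordPrefix x (k - 1), (hk _).2 (by omega), x.1 (k - 1), ?_, ?_⟩
  · rw [← wordPrefix_succ, Nat.sub_add_cancel hk0, hcyl]
  · rw [length_wordPrefix]; omega

lemma exists_injective_Bn (hA : Mixing A) (hm : 2 ≤ m) (hΨ : AlmostAdditive A Ψ CΨ)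
    (hneg : PhiMax A Ψ CΨ < 0) {t : ℝ} (ht : 0 < t) :
    ∃ f : Bn A Ψ t → heavyWords A Ψ t × Fin m × Fin (⌈t / -PhiMax A Ψ CΨ⌉₊ + m + 1),
      Function.Injective f := by
  choose p hp c hc hlen using fun w : Bn A Ψ t =>
    exists_cyl_eq_cyl_append_of_mem_Bn hA hm hΨ hneg ht w.2
  refine ⟨fun w => (⟨p w, hp w⟩, c w, ⟨w.1.length, ?_⟩), fun w w' h => ?_⟩
  · have := length_lt_of_mem_heavyWords hΨ hneg (hp w)
    have := hlen w
    omega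
  simp only [Prod.mk.injEq, Subtype.mk.injEq, Fin.mk.injEq] at h
  obtain ⟨hpw, hcw, hlw⟩ := h
  obtain ⟨z, hz⟩ := nonempty_cyl_of_mem_Bn w.2
  have hz' : z ∈ cyl A w'.1 := by rw [hc w', ← hpw, ← hcw, ← hc w]; exact hz
  exact Subtype.ext (eq_of_mem_cyl_of_length_eq hz hz' hlw)

lemma finite_Bn (hA : Mixing A) (hm : 2 ≤ m) (hΨ : AlmostAdditive A Ψ CΨ)
    (hneg : PhiMax A Ψ CΨ < 0) {t : ℝ} (ht : 0 < t) : Finite (Bn A Ψ t) := by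
  obtain ⟨f, hf⟩ := exists_injective_Bn hA hm hΨ hneg ht
  have := (finite_heavyWords hΨ hneg t).to_subtype
  exact Finite.of_injective f hf

lemma card_Bn_le (hA : Mixing A) (hm : 2 ≤ m) (hΨ : AlmostAdditive A Ψ CΨ)
    (hneg : PhiMax A Ψ CΨ < 0) {t : ℝ} (ht : 0 < t) :
    Nat.card (Bn A Ψ t) ≤
      Nat.card (heavyWords A Ψ t) * (m * (⌈t / -PhiMax A Ψ CΨ⌉₊ + m + 1)) := by
  obtain ⟨f, hf⟩ := exists_injective_Bn hA hm hΨ hneg ht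
  have := (finite_heavyWords hΨ hneg t).to_subtype
  simpa [Nat.card_prod] using Nat.card_le_card_of_injective f hf

/-- Every heavy word is a prefix of a word of `B_t(Ψ)`, of length less than `⌈t/|Ψ_max|⌉`. -/
lemma card_heavyWords_le_card_Bn_mul (hA : Mixing A) (hm : 2 ≤ m)
    (hΨ : AlmostAdditive A Ψ CΨ) (hneg : PhiMax A Ψ CΨ < 0) {t : ℝ} (ht : 0 < t) :
    Nat.card (heavyWords A Ψ t) ≤ Nat.card (Bn A Ψ t) * ⌈t / -PhiMax A Ψ CΨ⌉₊ := by
  have := finite_Bn hA hm hΨ hneg ht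
  let prefixOf : Bn A Ψ t × Fin ⌈t / -PhiMax A Ψ CΨ⌉₊ → List (Fin m) :=
    fun vL => vL.1.1.take vL.2
  refine (card_le_card_of_subset_range prefixOf fun w hw => ?_).trans
    (by simp [Nat.card_prod])
  obtain ⟨x, hx⟩ := nonempty_cyl_of_wordSup_pos ((Real.exp_pos _).trans hw)
  have hwx := eq_wordPrefix_of_mem_cyl hx
  obtain ⟨k, -, hk⟩ := exists_wordPrefix_mem_heavyWords_iff hA (by omega) hΨ hneg x ht
  have hwk : w.length < k := (hk _).1 (by rw [← hwx]; exact hw)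
  refine ⟨(⟨wordPrefix x k, x, (ballD_eq_cyl hk).symm⟩,
    ⟨w.length, length_lt_of_mem_heavyWords hΨ hneg hw⟩), ?_⟩
  simp only [prefixOf]
  rw [take_wordPrefix x hwk.le, ← hwx]

/-- Fekete's lemma applied to `n ↦ log ((m + 1) #M(n + C))`, which is subadditive by
`card_heavyWords_add_le`; the shift by `C` costs only a constant factor. -/
lemma exists_tendsto_log_card_heavyWords (hA : Mixing A) (hm : 0 < m)
    (hΨ : AlmostAdditive A Ψ CΨ) (hneg : PhiMax A Ψ CΨ < 0) :
    ∃ L, Tendsto (fun n : ℕ => Real.log (Nat.card (heavyWords A Ψ n)) / n) atTop (𝓝 L) := by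
  set M : ℝ → ℕ := fun t => Nat.card (heavyWords A Ψ t)
  have hC := hΨ.posC
  have hMpos : ∀ t : ℝ, 0 < t → 0 < M t := fun t => card_heavyWords_pos hA hm hΨ hneg
  have hMC : ∀ n : ℕ, 0 < (m + 1) * M (n + CΨ) := fun n =>
    Nat.mul_pos m.succ_pos (hMpos _ (add_pos_of_nonneg_of_pos n.cast_nonneg hC))
  let u : ℕ → ℝ := fun n => Real.log ((m + 1) * M (n + CΨ) : ℕ)
  have hsub : Subadditive u := by
    intro p q
    have h := card_heavyWords_add_le hA hm hΨ hneg (t := p + CΨ) (s := q)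
      (add_pos_of_nonneg_of_pos p.cast_nonneg hC) q.cast_nonneg
    rw [show (p : ℝ) + CΨ + q = ((p + q : ℕ) : ℝ) + CΨ by push_cast; ring] at h
    refine log_le_log_add_log_of_le_mul (hMC (p + q)) ?_
    calc (m + 1) * M ((p + q : ℕ) + CΨ)
        ≤ (m + 1) * (M (p + CΨ) * ((m + 1) * M (q + CΨ))) := Nat.mul_le_mul_left _ h
      _ = (m + 1) * M (p + CΨ) * ((m + 1) * M (q + CΨ)) := by ring
  have hbdd : BddBelow (range fun n => u n / n) :=
    ⟨0, by rintro _ ⟨n, rfl⟩; exact div_nonneg (Real.log_natCast_nonneg _) n.cast_nonneg⟩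
  refine ⟨hsub.lim, tendsto_div_of_abs_sub_le (hsub.tendsto_lim hbdd)
    (c := Real.log ((m + 1) * ((m + 1) * M (CΨ + CΨ)) : ℕ)) ?_⟩
  filter_upwards [eventually_ge_atTop 1] with n hn
  have hn : (0 : ℝ) < n := by exact_mod_cast hn
  have hk : 1 ≤ (m + 1) * ((m + 1) * M (CΨ + CΨ)) :=
    Nat.mul_pos m.succ_pos (Nat.mul_pos m.succ_pos (hMpos _ (by linarith)))
  refine (abs_log_sub_log_le (hMpos _ hn) (hMC n) ?_ ?_).trans
    (le_add_of_nonneg_right (Real.log_natCast_nonneg n))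
  · calc M n ≤ M (n + CΨ) := Nat.card_mono (finite_heavyWords hΨ hneg _)
          (heavyWords_mono (by linarith))
      _ ≤ (m + 1) * M (n + CΨ) * ((m + 1) * ((m + 1) * M (CΨ + CΨ))) :=
          Nat.le_mul_of_pos_right _ hk |>.trans' (Nat.le_mul_of_pos_left _ (by omega))
  · calc (m + 1) * M (n + CΨ) ≤ (m + 1) * (M n * ((m + 1) * M (CΨ + CΨ))) :=
          Nat.mul_le_mul_left _ (card_heavyWords_add_le hA hm hΨ hneg hn hC.le)
      _ = M n * ((m + 1) * ((m + 1) * M (CΨ + CΨ))) := by ring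

/-- Heavy words at level `n` have length `< ⌈n/|Ψ_max|⌉`, and there are at most
`m ^ ⌈n/|Ψ_max|⌉` such words. -/
lemma le_log_div_of_tendsto_log_card_heavyWords (hA : Mixing A) (hm : 2 ≤ m)
    (hΨ : AlmostAdditive A Ψ CΨ) (hneg : PhiMax A Ψ CΨ < 0) {L : ℝ}
    (hL : Tendsto (fun n : ℕ => Real.log (Nat.card (heavyWords A Ψ n)) / n) atTop (𝓝 L)) :
    L ≤ Real.log m / -PhiMax A Ψ CΨ := by
  have ha : 0 < -PhiMax A Ψ CΨ := neg_pos.2 hneg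
  have hlogm : 0 ≤ Real.log m := Real.log_natCast_nonneg m
  have hbound : ∀ᶠ n : ℕ in atTop, Real.log (Nat.card (heavyWords A Ψ n)) / n ≤
      Real.log m / -PhiMax A Ψ CΨ + Real.log m / n := by
    filter_upwards [eventually_ge_atTop 1] with n hn
    have hn : (0 : ℝ) < n := by exact_mod_cast hn
    have hcard : Nat.card (heavyWords A Ψ n) ≤ m ^ ⌈n / -PhiMax A Ψ CΨ⌉₊ :=
      (Nat.card_mono (List.finite_length_lt _ _)
        fun _ => length_lt_of_mem_heavyWords hΨ hneg).trans (card_length_lt_le hm _)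
    have hlog : Real.log (Nat.card (heavyWords A Ψ n)) ≤
        (n / -PhiMax A Ψ CΨ + 1) * Real.log m := by
      calc Real.log (Nat.card (heavyWords A Ψ n))
          ≤ Real.log ((m : ℝ) ^ ⌈n / -PhiMax A Ψ CΨ⌉₊) := Real.log_le_log
            (by exact_mod_cast card_heavyWords_pos hA (by omega) hΨ hneg hn)
            (by exact_mod_cast hcard)
        _ ≤ (n / -PhiMax A Ψ CΨ + 1) * Real.log m := by
            rw [Real.log_pow]
            gcongr
            exact (Nat.ceil_lt_add_one (div_pos hn ha).le).le
    rw [div_le_iff₀ hn]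
    calc _ ≤ _ := hlog
      _ = (Real.log m / -PhiMax A Ψ CΨ + Real.log m / n) * n := by field_simp
  refine le_of_tendsto_of_tendsto hL ?_ hbound
  simpa using tendsto_const_nhds.add (tendsto_const_div_atTop_nhds_zero_nat (Real.log m))

lemma tendsto_log_card_Bn (hA : Mixing A) (hm : 2 ≤ m) (hΨ : AlmostAdditive A Ψ CΨ)
    (hneg : PhiMax A Ψ CΨ < 0) {L : ℝ}
    (hL : Tendsto (fun n : ℕ => Real.log (Nat.card (heavyWords A Ψ n)) / n) atTop (𝓝 L)) :
    Tendsto (fun n : ℕ => Real.log (Nat.card (Bn A Ψ n)) / n) atTop (𝓝 L) := by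
  have ha : 0 < -PhiMax A Ψ CΨ := neg_pos.2 hneg
  refine tendsto_div_of_abs_sub_le hL
    (c := Real.log (m * (1 / -PhiMax A Ψ CΨ + m + 2))) ?_
  filter_upwards [eventually_ge_atTop 1] with n hn
  have hn1 : (1 : ℝ) ≤ n := by exact_mod_cast hn
  have hn : (0 : ℝ) < n := by positivity
  set N := ⌈n / -PhiMax A Ψ CΨ⌉₊
  have hMpos := card_heavyWords_pos hA (by omega) hΨ hneg hn
  have hMB := card_heavyWords_le_card_Bn_mul hA hm hΨ hneg hn
  have hBpos : 0 < Nat.card (Bn A Ψ n) :=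
    Nat.pos_of_ne_zero fun h => by rw [h, zero_mul] at hMB; omega
  have hk : (0 : ℝ) < (m * (N + m + 1) : ℕ) := by exact_mod_cast by positivity
  refine (abs_log_sub_log_le hBpos hMpos (card_Bn_le hA hm hΨ hneg hn)
    (hMB.trans (Nat.mul_le_mul_left _ ?_))).trans ?_
  · nlinarith
  rw [← Real.log_mul (by positivity) hn.ne']
  refine Real.log_le_log hk ?_
  have hN : (N : ℝ) < 1 / -PhiMax A Ψ CΨ * n + 1 := by
    rw [one_div_mul_eq_div]; exact Nat.ceil_lt_add_one (div_pos hn ha).le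
  have hm2n : (m + 2 : ℝ) ≤ (m + 2) * n := le_mul_of_one_le_right (by positivity) hn1
  push_cast
  calc (m : ℝ) * (N + m + 1) ≤ m * ((1 / -PhiMax A Ψ CΨ + m + 2) * n) := by
        gcongr
        linarith
    _ = _ := by ring

/-- For `m = 1` the subshift is a single point, so every cylinder is the whole space and
`B_t(Ψ)` is the infinite set of all words; `Nat.card` then takes its junk value `0`. -/
lemma card_Bn_eq_zero {A : Matrix (Fin 1) (Fin 1) ℕ} (hA : Mixing A)
    (Ψ : ℕ → Subshift A → ℝ) (t : ℝ) : Nat.card (Bn A Ψ t) = 0 := by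
  obtain ⟨x⟩ := hA.nonempty one_pos
  have hsub : ∀ y : Subshift A, y = x := fun y =>
    Subtype.ext (funext fun _ => Subsingleton.elim _ _)
  have hB : Bn A Ψ t = univ := eq_univ_of_forall fun w => ⟨x, by
    ext y
    rw [hsub y]
    exact iff_of_true (fun _ => Subsingleton.elim _ _) (mem_ballD_self x t)⟩
  rw [hB, Nat.card_univ, Nat.card_eq_zero_of_infinite]

/-- The limit `D(Ψ) = lim_n (log # B_n(Ψ))/n` exists and satisfies
`D(Ψ) ≤ (1 + 1/|Ψ_max|) log m`. -/
theorem statement4 {m : ℕ} (hm : 0 < m) (A : Matrix (Fin m) (Fin m) ℕ) (hA : Mixing A)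
    (Ψ : ℕ → Subshift A → ℝ) (CΨ : ℝ) (hΨ : AlmostAdditive A Ψ CΨ)
    (hneg : PhiMax A Ψ CΨ < 0) :
    ∃ D : ℝ,
      Tendsto (fun n : ℕ => Real.log (Nat.card (Bn A Ψ (n : ℝ))) / n) atTop (𝓝 D) ∧
      DPsi A Ψ = D ∧
      D ≤ (1 + 1 / |PhiMax A Ψ CΨ|) * Real.log m := by
  rcases Nat.lt_or_ge m 2 with hm1 | hm2
  · obtain rfl : m = 1 := by omega
    have h0 : (fun n : ℕ => Real.log (Nat.card (Bn A Ψ (n : ℝ))) / n) = fun _ => 0 := by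
      simp [card_Bn_eq_zero hA]
    exact ⟨0, h0 ▸ tendsto_const_nhds, by rw [DPsi, h0]; exact tendsto_const_nhds.limUnder_eq,
      by simp⟩
  obtain ⟨L, hL⟩ := exists_tendsto_log_card_heavyWords hA hm hΨ hneg
  have hB := tendsto_log_card_Bn hA hm2 hΨ hneg hL
  refine ⟨L, hB, hB.limUnder_eq, ?_⟩
  have hlogm : 0 ≤ Real.log m := Real.log_natCast_nonneg m
  calc L ≤ Real.log m / -PhiMax A Ψ CΨ :=
        le_log_div_of_tendsto_log_card_heavyWords hA hm2 hΨ hneg hL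
    _ ≤ (1 + 1 / |PhiMax A Ψ CΨ|) * Real.log m := by
      rw [abs_of_neg hneg, div_eq_mul_one_div, mul_comm]
      exact mul_le_mul_of_nonneg_right (le_add_of_nonneg_left zero_le_one) hlogm

end AlmostAdditivePaper
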